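/- arXiv:1410.1826 — 6 statements merged into one kernel-verified Lean document; each statement's English description precedes it below -/
import Mathlib

section
/- (Main theorem, simple version.) Let k : ℕ → ℕ be any sequence with 1 ≤ k(n) and k(n) = o(n) as n → ∞. Then for every ε > 0 and δ > 0 there exists n₀ such that for all n ≥ n₀ and every integer m ≥ (1+δ)·k(n)·log₂(n·k(n)), there exists an m×n binary matrix that is ε-almost k(n)-separable. In particular, ε-almost k-separable matrices exist with m = O(k log n) rows. -/
/-- The support of column `i` of a binary matrix `A`. -/
def colSupp {m n : ℕ} (A : Fin m → Fin n → Bool) (i : Fin n) : Finset (Fin m) :=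
  Finset.univ.filter (fun j => A j i = true)

/-- The support of the disjunction of the columns in `K`. -/
def unionSupp {m n : ℕ} (A : Fin m → Fin n → Bool) (K : Finset (Fin n)) : Finset (Fin m) :=
  K.biUnion (colSupp A)

/-- `A` is `ε`-almost `k`-separable: for at most `ε·C(n,k)` sets `K` of size `k` does
there exist another set `L` of size `k` with the same disjunction. -/
def AlmostSeparable {m n : ℕ} (A : Fin m → Fin n → Bool) (k : ℕ) (ε : ℝ) : Prop :=
  (Set.ncard {K : Finset (Fin n) | K.card = k ∧
      ∃ L : Finset (Fin n), L.card = k ∧ L ≠ K ∧ unionSupp A L = unionSupp A K} : ℝ)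
    ≤ ε * (n.choose k)

open Finset Real

/-- Sum of products over all functions equals product of sums. -/
lemma sum_prod_eq_prod_sum {ι β : Type*} [Fintype ι] [DecidableEq ι] [Fintype β]
    [DecidableEq β] (f : ι → β → ℝ) :
    ∑ g : ι → β, ∏ i, f i (g i) = ∏ i, ∑ b, f i b := by
  rw [← Finset.sum_prod_piFinset (univ : Finset β) f, Fintype.piFinset_univ]

/-- Weighted count of rows vanishing on `S`. -/
lemma sum_zeroOn {N : ℕ} (p q : ℝ) (hpq : p + q = 1) (S : Finset (Fin N)) :
    ∑ v : Fin N → Bool, (if ∀ i ∈ S, v i = false then ∏ i, (if v i then p else q) else 0)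
      = q ^ S.card := by
  set f : Fin N → Bool → ℝ :=
    fun i b => if i ∈ S then (if b then 0 else q) else (if b then p else q) with hf
  have h1 : ∀ v : Fin N → Bool,
      (if ∀ i ∈ S, v i = false then ∏ i, (if v i then p else q) else 0)
        = ∏ i, f i (v i) := by
    intro v
    by_cases hv : ∀ i ∈ S, v i = false
    · rw [if_pos hv]
      refine Finset.prod_congr rfl fun i _ => ?_
      by_cases hi : i ∈ S
      · simp [hf, hi, hv i hi]
      · simp [hf, hi]
    · rw [if_neg hv]
      push_neg at hv
      obtain ⟨i, hiS, hvi⟩ := hv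
      have : v i = true := by simpa using hvi
      symm
      exact Finset.prod_eq_zero (Finset.mem_univ i) (by simp [hf, hiS, this])
  rw [Finset.sum_congr rfl fun v _ => h1 v, sum_prod_eq_prod_sum f]
  have h2 : ∀ i : Fin N, (∑ b : Bool, f i b) = if i ∈ S then q else 1 := by
    intro i
    by_cases hi : i ∈ S <;> simp [hf, hi, Fintype.sum_bool, hpq] <;> linarith
  rw [Finset.prod_congr rfl fun i _ => h2 i, Finset.prod_ite_mem, Finset.univ_inter,
    Finset.prod_const]

/-- Total weight is 1. -/
lemma sum_wrow {N : ℕ} (p q : ℝ) (hpq : p + q = 1) :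
    ∑ v : Fin N → Bool, ∏ i, (if v i then p else q) = 1 := by
  have := sum_zeroOn (N := N) p q hpq ∅
  simpa using this

/-- Weighted count of rows vanishing on `L` but not on `K`. -/
lemma sum_meets {N : ℕ} (p q : ℝ) (hpq : p + q = 1) (K L : Finset (Fin N)) :
    ∑ v : Fin N → Bool,
      (if (∀ i ∈ L, v i = false) ∧ ¬(∀ i ∈ K, v i = false)
        then ∏ i, (if v i then p else q) else 0)
      = q ^ L.card - q ^ (K ∪ L).card := by
  rw [← sum_zeroOn p q hpq L, ← sum_zeroOn p q hpq (K ∪ L), ← Finset.sum_sub_distrib]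
  refine Finset.sum_congr rfl fun v _ => ?_
  have hKL : (∀ i ∈ K ∪ L, v i = false) ↔ (∀ i ∈ K, v i = false) ∧ (∀ i ∈ L, v i = false) := by
    constructor
    · intro h; exact ⟨fun i hi => h i (Finset.mem_union_left _ hi),
        fun i hi => h i (Finset.mem_union_right _ hi)⟩
    · rintro ⟨h1, h2⟩ i hi
      rcases Finset.mem_union.1 hi with h | h
      · exact h1 i h
      · exact h2 i h
  by_cases hL : ∀ i ∈ L, v i = false <;> by_cases hK : ∀ i ∈ K, v i = false
  · rw [if_neg (by tauto), if_pos hL, if_pos (hKL.2 ⟨hK, hL⟩)]; ring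
  · rw [if_pos ⟨hL, hK⟩, if_pos hL, if_neg (fun h => hK (hKL.1 h).1)]; ring
  · rw [if_neg (by tauto), if_neg hL, if_neg (fun h => hL (hKL.1 h).2)]; ring
  · rw [if_neg (by tauto), if_neg hL, if_neg (fun h => hL (hKL.1 h).2)]; ring

/-- Per-row weight of the event `row meets K ↔ row meets L`. -/
lemma sum_good {N : ℕ} (p q : ℝ) (hpq : p + q = 1) (K L : Finset (Fin N)) :
    ∑ v : Fin N → Bool,
      (if ((∃ i ∈ K, v i = true) ↔ (∃ i ∈ L, v i = true))
        then ∏ i, (if v i then p else q) else 0)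
      = 1 - (q ^ L.card - q ^ (K ∪ L).card) - (q ^ K.card - q ^ (L ∪ K).card) := by
  rw [← sum_wrow p q hpq (N := N), ← sum_meets p q hpq K L, ← sum_meets p q hpq L K,
    ← Finset.sum_sub_distrib, ← Finset.sum_sub_distrib]
  refine Finset.sum_congr rfl fun v _ => ?_
  have hK : (∃ i ∈ K, v i = true) ↔ ¬(∀ i ∈ K, v i = false) := by
    push_neg; simp
  have hL : (∃ i ∈ L, v i = true) ↔ ¬(∀ i ∈ L, v i = false) := by
    push_neg; simp
  by_cases h1 : ∀ i ∈ K, v i = false <;> by_cases h2 : ∀ i ∈ L, v i = false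
  · rw [if_pos (by rw [hK, hL]; tauto), if_neg (by tauto), if_neg (by tauto)]; ring
  · rw [if_neg (by rw [hK, hL]; tauto), if_neg (by tauto), if_pos ⟨h1, h2⟩]; ring
  · rw [if_neg (by rw [hK, hL]; tauto), if_pos ⟨h2, h1⟩, if_neg (by tauto)]; ring
  · rw [if_pos (by rw [hK, hL]; tauto), if_neg (by tauto), if_neg (by tauto)]; ring

/-- Per-row weight of the good event, when `q^|K| = q^|L| = 1/2`. -/
lemma sum_good_half {N : ℕ} (p q : ℝ) (hpq : p + q = 1) (K L : Finset (Fin N))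
    (hcard : K.card = L.card) (hq2 : q ^ K.card = 1/2) :
    ∑ v : Fin N → Bool,
      (if ((∃ i ∈ K, v i = true) ↔ (∃ i ∈ L, v i = true))
        then ∏ i, (if v i then p else q) else 0)
      = q ^ (L \ K).card := by
  rw [sum_good p q hpq K L]
  have h1 : (K ∪ L).card = K.card + (L \ K).card := by
    rw [Finset.union_comm, ← Finset.card_sdiff_add_card L K, add_comm]
  have h2 : (L ∪ K).card = K.card + (L \ K).card := by rw [Finset.union_comm]; exact h1
  have h3 : q ^ L.card = 1/2 := by rw [← hcard, hq2]
  rw [h1, h2, pow_add, hq2, h3]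
  ring

/-- The matrix-level weighted count of the collision event factorises over rows. -/
lemma sum_matrix {m n : ℕ} (p q : ℝ) (K L : Finset (Fin n)) :
    ∑ A : Fin m → Fin n → Bool,
      (if unionSupp A K = unionSupp A L then ∏ j, ∏ i, (if A j i then p else q) else 0)
      = (∑ v : Fin n → Bool,
          (if ((∃ i ∈ K, v i = true) ↔ (∃ i ∈ L, v i = true))
            then ∏ i, (if v i then p else q) else 0)) ^ m := by
  set g : Fin n → Bool → ℝ := fun _ b => if b then p else q
  set h : (Fin n → Bool) → ℝ := fun v =>
    if ((∃ i ∈ K, v i = true) ↔ (∃ i ∈ L, v i = true)) then ∏ i, g i (v i) else 0 with hh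
  have key : ∀ A : Fin m → Fin n → Bool,
      (if unionSupp A K = unionSupp A L then ∏ j, ∏ i, (if A j i then p else q) else 0)
        = ∏ j, h (A j) := by
    intro A
    have hcond : unionSupp A K = unionSupp A L ↔
        ∀ j, ((∃ i ∈ K, A j i = true) ↔ (∃ i ∈ L, A j i = true)) := by
      constructor
      · intro hEq j
        have := Finset.ext_iff.1 hEq j
        simpa [unionSupp, colSupp, Finset.mem_biUnion, Finset.mem_filter] using this
      · intro hrow
        ext j
        simpa [unionSupp, colSupp, Finset.mem_biUnion, Finset.mem_filter] using hrow j
    by_cases hA : unionSupp A K = unionSupp A L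
    · rw [if_pos hA]
      refine Finset.prod_congr rfl fun j _ => ?_
      rw [hh]
      simp only []
      rw [if_pos (hcond.1 hA j)]
    · rw [if_neg hA]
      rw [hcond] at hA
      rw [not_forall] at hA
      obtain ⟨j, hj⟩ := hA
      symm
      refine Finset.prod_eq_zero (Finset.mem_univ j) ?_
      rw [hh]
      simp only []
      rw [if_neg hj]
  rw [Finset.sum_congr rfl fun A _ => key A]
  have := sum_prod_eq_prod_sum (ι := Fin m) (β := Fin n → Bool) (fun _ v => h v)
  rw [this, Finset.prod_const, Finset.card_univ, Fintype.card_fin]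

lemma one_add_inv_pow_le_three {k : ℕ} (hk : 1 ≤ k) : (1/(k:ℝ) + 1) ^ k ≤ 3 := by
  have hk0 : (0:ℝ) < k := by exact_mod_cast hk
  have h1 : 1/(k:ℝ) + 1 ≤ Real.exp (1/(k:ℝ)) := Real.add_one_le_exp _
  have h2 : (1/(k:ℝ) + 1) ^ k ≤ Real.exp (1/(k:ℝ)) ^ k :=
    pow_le_pow_left₀ (by positivity) h1 k
  have h3 : Real.exp (1/(k:ℝ)) ^ k = Real.exp 1 := by
    rw [← Real.exp_nat_mul]
    congr 1
    field_simp
  calc (1/(k:ℝ) + 1) ^ k ≤ Real.exp 1 := by rw [← h3]; exact h2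
    _ ≤ 3 := by linarith [Real.exp_one_lt_d9]

lemma key_combo {n k m : ℕ} (hk : 1 ≤ k) (hn : 1 ≤ n) (q δ ε : ℝ) (hq0 : 0 ≤ q)
    (hδ : 0 < δ)
    (hqm : q ^ m ≤ ((n : ℝ) * (k : ℝ)) ^ (-(1 + δ)))
    (hne : 3 * (n : ℝ) ^ (-δ) ≤ ε)
    (K : Finset (Fin n)) (hK : K.card = k) :
    ∑ L ∈ ((Finset.univ : Finset (Fin n)).powersetCard k).erase K, (q ^ (L \ K).card) ^ m ≤ ε := by
  classical
  have hn0 : (0:ℝ) < n := by exact_mod_cast hn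
  have hk0 : (0:ℝ) < k := by exact_mod_cast hk
  have hn1 : (1:ℝ) ≤ n := by exact_mod_cast hn
  have hk1 : (1:ℝ) ≤ k := by exact_mod_cast hk
  set s := ((Finset.univ : Finset (Fin n)).powersetCard k).erase K with hs
  have hterm : ∀ L ∈ s, (q ^ (L \ K).card) ^ m = (q ^ m) ^ (L \ K).card := fun L _ =>
    pow_right_comm q _ m
  rw [Finset.sum_congr rfl hterm]
  have hcards : ∀ L ∈ s, L.card = k ∧ L ≠ K := by
    intro L hL
    rw [hs, Finset.mem_erase, Finset.mem_powersetCard_univ] at hL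
    exact ⟨hL.2, hL.1⟩
  have hsd : ∀ L ∈ s, (K \ L).card = (L \ K).card := by
    intro L hL
    have h1 := Finset.card_sdiff_add_card_inter K L
    have h2 := Finset.card_sdiff_add_card_inter L K
    rw [Finset.inter_comm] at h2
    have h3 := (hcards L hL).1
    omega
  have hmaps : ∀ L ∈ s, (L \ K).card ∈ Finset.Icc 1 k := by
    intro L hL
    obtain ⟨hLk, hLne⟩ := hcards L hL
    refine Finset.mem_Icc.2 ⟨?_, ?_⟩
    · rcases Nat.eq_zero_or_pos (L \ K).card with h0 | h1
      · exfalso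
        have hsub : L ⊆ K := Finset.sdiff_eq_empty_iff_subset.1 (Finset.card_eq_zero.1 h0)
        exact hLne (Finset.eq_of_subset_of_card_le hsub (by rw [hK, hLk]))
      · exact h1
    · calc (L \ K).card ≤ L.card := Finset.card_le_card Finset.sdiff_subset
        _ = k := hLk
  rw [← Finset.sum_fiberwise_of_maps_to hmaps]
  have hqm0 : (0:ℝ) ≤ q ^ m := pow_nonneg hq0 m
  have hfiber : ∀ d ∈ Finset.Icc 1 k,
      (∑ L ∈ s.filter (fun L => (L \ K).card = d), (q ^ m) ^ (L \ K).card)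
        ≤ ((k.choose d : ℝ) * (n : ℝ) ^ d) * (q ^ m) ^ d := by
    intro d _
    have hconst : ∀ L ∈ s.filter (fun L => (L \ K).card = d),
        (q ^ m) ^ (L \ K).card = (q ^ m) ^ d := by
      intro L hL; rw [(Finset.mem_filter.1 hL).2]
    rw [Finset.sum_congr rfl hconst, Finset.sum_const, nsmul_eq_mul]
    have hinj : (s.filter (fun L => (L \ K).card = d)).card ≤
        (K.powersetCard d ×ˢ (Finset.univ : Finset (Fin n)).powersetCard d).card := by
      apply Finset.card_le_card_of_injOn (fun L => (K \ L, L \ K))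
      · intro L hL
        obtain ⟨hLs, hLd⟩ := Finset.mem_filter.1 hL
        refine Finset.mem_product.2 ⟨?_, ?_⟩
        · exact Finset.mem_powersetCard.2 ⟨Finset.sdiff_subset, by rw [hsd L hLs, hLd]⟩
        · exact Finset.mem_powersetCard.2 ⟨Finset.subset_univ _, hLd⟩
      · intro L1 _ L2 _ heq
        have hr : ∀ L : Finset (Fin n), (K \ (K \ L)) ∪ (L \ K) = L := by
          intro L; ext i
          simp only [Finset.mem_union, Finset.mem_sdiff]
          tauto
        have e1 : K \ L1 = K \ L2 := congrArg Prod.fst heq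
        have e2 : L1 \ K = L2 \ K := congrArg Prod.snd heq
        rw [← hr L1, ← hr L2, e1, e2]
    have hcard : ((s.filter (fun L => (L \ K).card = d)).card : ℝ)
        ≤ (k.choose d : ℝ) * (n:ℝ)^d := by
      calc ((s.filter (fun L => (L \ K).card = d)).card : ℝ)
          ≤ ((K.powersetCard d ×ˢ (Finset.univ : Finset (Fin n)).powersetCard d).card : ℝ) := by
            exact_mod_cast hinj
        _ = (k.choose d : ℝ) * ((n.choose d : ℝ)) := by
            rw [Finset.card_product, Finset.card_powersetCard, Finset.card_powersetCard, hK,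
              Finset.card_univ, Fintype.card_fin]
            push_cast; ring
        _ ≤ (k.choose d : ℝ) * (n:ℝ)^d := by
            refine mul_le_mul_of_nonneg_left ?_ (Nat.cast_nonneg _)
            exact_mod_cast Nat.choose_le_pow n d
    exact mul_le_mul_of_nonneg_right hcard (pow_nonneg hqm0 d)
  have hstep2 : ∀ d ∈ Finset.Icc 1 k,
      ((k.choose d : ℝ) * (n:ℝ)^d) * (q^m)^d
        ≤ (n:ℝ)^(-δ) * ((k.choose d : ℝ) * (1/(k:ℝ))^d) := by
    intro d hd
    obtain ⟨hd1, _⟩ := Finset.mem_Icc.1 hd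
    have hqm' : (q^m)^d ≤ (((n:ℝ)*(k:ℝ)) ^ (-(1+δ)))^d := pow_le_pow_left₀ hqm0 hqm d
    have hxsplit : ((n:ℝ)*(k:ℝ)) ^ (-(1+δ)) = (n:ℝ)^(-(1+δ)) * (k:ℝ)^(-(1+δ)) :=
      Real.mul_rpow (le_of_lt hn0) (le_of_lt hk0)
    have hna : (n:ℝ) * (n:ℝ)^(-(1+δ)) = (n:ℝ)^(-δ) := by
      nth_rewrite 1 [← Real.rpow_one (n:ℝ)]
      rw [← Real.rpow_add hn0]
      ring_nf
    have key : (n:ℝ)^d * (q^m)^d ≤ ((n:ℝ)^(-δ) * (k:ℝ)^(-(1+δ)))^d := by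
      calc (n:ℝ)^d * (q^m)^d ≤ (n:ℝ)^d * ((((n:ℝ)*(k:ℝ))^(-(1+δ)))^d) :=
            mul_le_mul_of_nonneg_left hqm' (pow_nonneg (le_of_lt hn0) d)
        _ = ((n:ℝ) * ((n:ℝ)*(k:ℝ))^(-(1+δ)))^d := by rw [mul_pow]
        _ = ((n:ℝ)^(-δ) * (k:ℝ)^(-(1+δ)))^d := by rw [hxsplit, ← mul_assoc, hna]
    have ha0 : (0:ℝ) ≤ (n:ℝ)^(-δ) := Real.rpow_nonneg (le_of_lt hn0) _
    have ha1 : (n:ℝ)^(-δ) ≤ 1 := Real.rpow_le_one_of_one_le_of_nonpos hn1 (by linarith)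
    have hb : (k:ℝ)^(-(1+δ)) ≤ 1/(k:ℝ) := by
      have h := Real.rpow_le_rpow_of_exponent_le hk1 (show -(1+δ) ≤ -1 by linarith)
      rw [Real.rpow_neg_one] at h
      simpa [one_div] using h
    have hb0 : (0:ℝ) ≤ (k:ℝ)^(-(1+δ)) := Real.rpow_nonneg (le_of_lt hk0) _
    have key2 : ((n:ℝ)^(-δ) * (k:ℝ)^(-(1+δ)))^d ≤ (n:ℝ)^(-δ) * (1/(k:ℝ))^d := by
      rw [mul_pow]
      have h1 : ((n:ℝ)^(-δ))^d ≤ (n:ℝ)^(-δ) := pow_le_of_le_one ha0 ha1 (by omega)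
      have h2 : ((k:ℝ)^(-(1+δ)))^d ≤ (1/(k:ℝ))^d := pow_le_pow_left₀ hb0 hb d
      exact mul_le_mul h1 h2 (pow_nonneg hb0 d) ha0
    calc ((k.choose d:ℝ) * (n:ℝ)^d) * (q^m)^d
        = (k.choose d:ℝ) * ((n:ℝ)^d * (q^m)^d) := by ring
      _ ≤ (k.choose d:ℝ) * ((n:ℝ)^(-δ) * (1/(k:ℝ))^d) :=
          mul_le_mul_of_nonneg_left (le_trans key key2) (Nat.cast_nonneg _)
      _ = (n:ℝ)^(-δ) * ((k.choose d:ℝ) * (1/(k:ℝ))^d) := by ring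
  have ha0 : (0:ℝ) ≤ (n:ℝ)^(-δ) := Real.rpow_nonneg (le_of_lt hn0) _
  calc (∑ d ∈ Finset.Icc 1 k, ∑ L ∈ s.filter (fun L => (L \ K).card = d),
          (q ^ m) ^ (L \ K).card)
      ≤ ∑ d ∈ Finset.Icc 1 k, ((k.choose d : ℝ) * (n : ℝ) ^ d) * (q ^ m) ^ d :=
        Finset.sum_le_sum hfiber
    _ ≤ ∑ d ∈ Finset.Icc 1 k, (n:ℝ)^(-δ) * ((k.choose d : ℝ) * (1/(k:ℝ))^d) :=
        Finset.sum_le_sum hstep2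
    _ ≤ ∑ d ∈ Finset.range (k+1), (n:ℝ)^(-δ) * ((k.choose d : ℝ) * (1/(k:ℝ))^d) := by
        refine Finset.sum_le_sum_of_subset_of_nonneg ?_ ?_
        · intro d hd
          have := (Finset.mem_Icc.1 hd).2
          exact Finset.mem_range.2 (by omega)
        · intro d _ _
          positivity
    _ = (n:ℝ)^(-δ) * ∑ d ∈ Finset.range (k+1), (1/(k:ℝ))^d * 1^(k-d) * (k.choose d : ℝ) := by
        rw [Finset.mul_sum]
        refine Finset.sum_congr rfl fun d _ => ?_
        ring
    _ = (n:ℝ)^(-δ) * (1/(k:ℝ) + 1)^k := by rw [← add_pow]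
    _ ≤ (n:ℝ)^(-δ) * 3 := mul_le_mul_of_nonneg_left (one_add_inv_pow_le_three hk) ha0
    _ ≤ ε := by linarith

/-- Main theorem, simple version: for `k(n) = o(n)`, `ε`-almost `k(n)`-separable
`m × n` matrices exist whenever `m ≥ (1+δ)·k(n)·log₂(n·k(n))`; in particular with
`m = O(k log n)` rows. -/
theorem almostSeparable_exists_simple (k : ℕ → ℕ) (hk1 : ∀ n, 1 ≤ k n)
    (hko : (fun n => (k n : ℝ)) =o[Filter.atTop] (fun n => (n : ℝ)))
    (ε δ : ℝ) (hε : 0 < ε) (hδ : 0 < δ) :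
    ∃ n₀ : ℕ, ∀ n ≥ n₀, ∀ m : ℕ,
      (m : ℝ) ≥ (1 + δ) * (k n) * Real.logb 2 (n * (k n)) →
        ∃ A : Fin m → Fin n → Bool, AlmostSeparable A (k n) ε := by
  classical
  refine ⟨⌈(3/ε) ^ (δ⁻¹ : ℝ)⌉₊ + 1, fun n hn m hm => ?_⟩
  set kk := k n with hkk
  have hkk1 : 1 ≤ kk := hk1 n
  have hn1 : 1 ≤ n := le_trans (Nat.le_add_left 1 _) hn
  have hn0 : (0:ℝ) < n := by exact_mod_cast hn1
  have hk0 : (0:ℝ) < kk := by exact_mod_cast hkk1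
  have hnR1 : (1:ℝ) ≤ n := by exact_mod_cast hn1
  have hkR1 : (1:ℝ) ≤ kk := by exact_mod_cast hkk1
  -- the ε bound from the choice of n₀
  have hne : 3 * (n : ℝ) ^ (-δ) ≤ ε := by
    have hceil : ((3/ε) ^ (δ⁻¹ : ℝ) : ℝ) ≤ n := by
      calc ((3/ε) ^ (δ⁻¹ : ℝ) : ℝ) ≤ (⌈(3/ε) ^ (δ⁻¹ : ℝ)⌉₊ : ℝ) := Nat.le_ceil _
        _ ≤ n := by exact_mod_cast le_trans (Nat.le_succ _) hn
    have h30 : (0:ℝ) ≤ 3/ε := by positivity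
    have h2 : 3/ε ≤ (n:ℝ) ^ δ := by
      calc 3/ε = ((3/ε) ^ (δ⁻¹ : ℝ)) ^ δ := by
            rw [← Real.rpow_mul h30, inv_mul_cancel₀ (ne_of_gt hδ), Real.rpow_one]
        _ ≤ (n:ℝ) ^ δ := Real.rpow_le_rpow (Real.rpow_nonneg h30 _) hceil (le_of_lt hδ)
    have hpow : (0:ℝ) < (n:ℝ) ^ δ := Real.rpow_pos_of_pos hn0 _
    rw [Real.rpow_neg (le_of_lt hn0), ← div_eq_mul_inv, div_le_iff₀ hpow]
    rw [div_le_iff₀ hε] at h2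
    linarith
  -- the bias
  set q : ℝ := (2:ℝ) ^ (-(kk:ℝ)⁻¹) with hq
  set p : ℝ := 1 - q with hp
  have hq0 : 0 < q := Real.rpow_pos_of_pos two_pos _
  have hq1 : q < 1 := by
    apply Real.rpow_lt_one_of_one_lt_of_neg one_lt_two
    simp only [neg_neg, Left.neg_neg_iff]
    positivity
  have hp0 : 0 < p := by rw [hp]; linarith
  have hpq : p + q = 1 := by rw [hp]; ring
  have hqk : q ^ kk = 1/2 := by
    rw [hq, ← Real.rpow_natCast ((2:ℝ) ^ (-(kk:ℝ)⁻¹)) kk, ← Real.rpow_mul (by norm_num)]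
    rw [show -(kk:ℝ)⁻¹ * (kk:ℕ) = -1 by field_simp]
    rw [Real.rpow_neg_one]
    norm_num
  -- the key exponent bound
  have hx1 : (1:ℝ) ≤ (n:ℝ) * (kk:ℝ) := by nlinarith
  have hx0 : (0:ℝ) < (n:ℝ) * (kk:ℝ) := by linarith
  have hqm : q ^ m ≤ ((n : ℝ) * (kk : ℝ)) ^ (-(1 + δ)) := by
    have h1 : q ^ m = (2:ℝ) ^ (-(kk:ℝ)⁻¹ * m) := by
      rw [hq, ← Real.rpow_natCast ((2:ℝ) ^ (-(kk:ℝ)⁻¹)) m, ← Real.rpow_mul (by norm_num)]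
    have h2 : ((n : ℝ) * (kk : ℝ)) ^ (-(1 + δ))
        = (2:ℝ) ^ (Real.logb 2 ((n:ℝ) * (kk:ℝ)) * (-(1 + δ))) := by
      rw [Real.rpow_mul (by norm_num), Real.rpow_logb two_pos (by norm_num) hx0]
    rw [h1, h2]
    apply Real.rpow_le_rpow_of_exponent_le one_le_two
    have hdiv : (1+δ) * Real.logb 2 ((n:ℝ) * (kk:ℝ)) ≤ (m:ℝ) * (kk:ℝ)⁻¹ := by
      rw [← div_eq_mul_inv, le_div_iff₀ hk0]
      nlinarith [hm]
    nlinarith [hdiv]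
  -- the weight function
  set pc := ((Finset.univ : Finset (Fin n)).powersetCard kk) with hpc
  set W : (Fin m → Fin n → Bool) → ℝ := fun A => ∏ j, ∏ i, (if A j i then p else q) with hW
  have hWpos : ∀ A, 0 < W A := by
    intro A
    refine Finset.prod_pos fun j _ => Finset.prod_pos fun i _ => ?_
    by_cases h : A j i <;> simp [h, hp0, hq0]
  have hWsum : ∑ A : Fin m → Fin n → Bool, W A = 1 := by
    have h := sum_prod_eq_prod_sum (ι := Fin m) (β := Fin n → Bool)
      (fun _ v => ∏ i, (if v i then p else q))
    have h2 : (∑ A : Fin m → Fin n → Bool, W A)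
        = ∏ _j : Fin m, ∑ v : Fin n → Bool, ∏ i, (if v i then p else q) := h
    rw [h2, Finset.prod_congr rfl fun j _ => sum_wrow p q hpq, Finset.prod_const, one_pow]
  -- collision weights
  have hcol : ∀ K ∈ pc, ∀ L ∈ pc.erase K,
      (∑ A : Fin m → Fin n → Bool, if unionSupp A L = unionSupp A K then W A else 0)
        = (q ^ (L \ K).card) ^ m := by
    intro K hK L hL
    have hKc : K.card = kk := Finset.mem_powersetCard_univ.1 hK
    have hLc : L.card = kk := Finset.mem_powersetCard_univ.1 (Finset.mem_of_mem_erase hL)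
    have hcards : (K \ L).card = (L \ K).card := by
      have h1 := Finset.card_sdiff_add_card_inter K L
      have h2 := Finset.card_sdiff_add_card_inter L K
      rw [Finset.inter_comm] at h2
      omega
    have h := sum_matrix (m := m) p q L K
    rw [sum_good_half p q hpq L K (by rw [hKc, hLc]) (by rw [hLc]; exact hqk)] at h
    rw [h, hcards]
  -- the bad sets
  set Bad : (Fin m → Fin n → Bool) → Finset (Finset (Fin n)) := fun A =>
    pc.filter (fun K => ∃ L ∈ pc.erase K, unionSupp A L = unionSupp A K) with hBad
  have hBadeq : ∀ A : Fin m → Fin n → Bool,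
      {K : Finset (Fin n) | K.card = kk ∧
        ∃ L : Finset (Fin n), L.card = kk ∧ L ≠ K ∧ unionSupp A L = unionSupp A K}
        = ↑(Bad A) := by
    intro A
    ext K
    simp only [hBad, Set.mem_setOf_eq, Finset.coe_filter, Finset.mem_erase,
      Finset.mem_powersetCard_univ, hpc]
    constructor
    · rintro ⟨h1, L, h2, h3, h4⟩
      exact ⟨h1, L, ⟨h3, h2⟩, h4⟩
    · rintro ⟨h1, L, ⟨h3, h2⟩, h4⟩
      exact ⟨h1, L, h2, h3, h4⟩
  -- counting bound
  have hcount : ∀ A : Fin m → Fin n → Bool, ((Bad A).card : ℝ)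
      ≤ ∑ K ∈ pc, ∑ L ∈ pc.erase K, (if unionSupp A L = unionSupp A K then (1:ℝ) else 0) := by
    intro A
    have h1 : ((Bad A).card : ℝ)
        = ∑ K ∈ pc, (if ∃ L ∈ pc.erase K, unionSupp A L = unionSupp A K then (1:ℝ) else 0) := by
      rw [hBad]
      rw [Finset.card_filter]
      push_cast
      rfl
    rw [h1]
    refine Finset.sum_le_sum fun K _ => ?_
    split_ifs with hQ
    · obtain ⟨L, hL, heq⟩ := hQ
      calc (1:ℝ) = (if unionSupp A L = unionSupp A K then (1:ℝ) else 0) := by rw [if_pos heq]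
        _ ≤ ∑ L' ∈ pc.erase K, (if unionSupp A L' = unionSupp A K then (1:ℝ) else 0) :=
          Finset.single_le_sum (f := fun L' => (if unionSupp A L' = unionSupp A K then (1:ℝ) else 0))
            (fun L' _ => by positivity) hL
    · exact Finset.sum_nonneg fun L' _ => by positivity
  -- expectation bound
  have hexp : ∑ A : Fin m → Fin n → Bool, W A * ((Bad A).card : ℝ) ≤ ε * (n.choose kk) := by
    calc ∑ A : Fin m → Fin n → Bool, W A * ((Bad A).card : ℝ)
        ≤ ∑ A : Fin m → Fin n → Bool, W A *
            (∑ K ∈ pc, ∑ L ∈ pc.erase K, (if unionSupp A L = unionSupp A K then (1:ℝ) else 0)) :=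
          Finset.sum_le_sum fun A _ =>
            mul_le_mul_of_nonneg_left (hcount A) (le_of_lt (hWpos A))
      _ = ∑ K ∈ pc, ∑ L ∈ pc.erase K, ∑ A : Fin m → Fin n → Bool,
            (if unionSupp A L = unionSupp A K then W A else 0) := by
          simp only [Finset.mul_sum]
          rw [Finset.sum_comm]
          refine Finset.sum_congr rfl fun K _ => ?_
          rw [Finset.sum_comm]
          refine Finset.sum_congr rfl fun L _ => Finset.sum_congr rfl fun A _ => ?_
          rw [mul_ite, mul_one, mul_zero]
      _ ≤ ∑ K ∈ pc, ε := by
          refine Finset.sum_le_sum fun K hK => ?_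
          rw [Finset.sum_congr rfl fun L hL => hcol K hK L hL]
          exact key_combo hkk1 hn1 q δ ε (le_of_lt hq0) hδ hqm hne K
            (Finset.mem_powersetCard_univ.1 hK)
      _ = ε * (n.choose kk) := by
          rw [Finset.sum_const, nsmul_eq_mul, hpc, Finset.card_powersetCard,
            Finset.card_univ, Fintype.card_fin, mul_comm]
  -- conclude
  by_contra hcon
  push_neg at hcon
  have hlt : ∀ A : Fin m → Fin n → Bool, ε * (n.choose kk) < ((Bad A).card : ℝ) := by
    intro A
    have h := hcon A
    unfold AlmostSeparable at h
    rw [hBadeq A, Set.ncard_coe_finset] at h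
    exact not_le.1 h
  have hfinal : ε * (n.choose kk) < ∑ A : Fin m → Fin n → Bool, W A * ((Bad A).card : ℝ) := by
    calc ε * (n.choose kk) = ∑ A : Fin m → Fin n → Bool, W A * (ε * (n.choose kk)) := by
          rw [← Finset.sum_mul, hWsum, one_mul]
      _ < ∑ A : Fin m → Fin n → Bool, W A * ((Bad A).card : ℝ) := by
          refine Finset.sum_lt_sum_of_nonempty Finset.univ_nonempty fun A _ =>
            mul_lt_mul_of_pos_left (hlt A) (hWpos A)
  linarith
end

section
/- Let A be a random m×n binary matrix with each entry independently 1 with probability p and 0 with probability q = 1−p. Fix a set K of columns with |K| = k ≤ n/2. Then the probability that there exists a set L ≠ K with |L| = k and S(L) = S(K) is at most Σ_{b=0}^{k−1} C(k,b)·C(n−k, k−b)·(1 − 2q^k + 2q^{2k−b})^m. -/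
open MeasureTheory

/-- The Bernoulli(`p`) measure on `Bool`: mass `p` at `true`, mass `1-p` at `false`. -/
noncomputable def bernoulliMeasure (p : ℝ) : Measure Bool :=
  ENNReal.ofReal p • Measure.dirac true + ENNReal.ofReal (1 - p) • Measure.dirac false

/-- The law of a random `m × n` binary matrix whose entries are i.i.d. Bernoulli(`p`). -/
noncomputable def matrixMeasure (m n : ℕ) (p : ℝ) : Measure (Fin m → Fin n → Bool) :=
  Measure.pi fun _ : Fin m => Measure.pi fun _ : Fin n => bernoulliMeasure p


instance (p : ℝ) : IsFiniteMeasure (bernoulliMeasure p) := by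
  constructor; simp [bernoulliMeasure]

lemma bern_univ (p : ℝ) (h0 : 0 ≤ p) (h1 : p ≤ 1) : bernoulliMeasure p Set.univ = 1 := by
  simp [bernoulliMeasure, ← ENNReal.ofReal_add h0 (by linarith : (0:ℝ) ≤ 1 - p)]

lemma bern_false (p : ℝ) : bernoulliMeasure p {false} = ENNReal.ofReal (1 - p) := by
  simp [bernoulliMeasure]


noncomputable def rowMeasure (n : ℕ) (p : ℝ) : Measure (Fin n → Bool) :=
  Measure.pi fun _ : Fin n => bernoulliMeasure p

instance (n : ℕ) (p : ℝ) : IsFiniteMeasure (rowMeasure n p) := by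
  unfold rowMeasure; infer_instance

/-- rows that miss every column of S -/
def missSet {n : ℕ} (S : Finset (Fin n)) : Set (Fin n → Bool) := {f | ∀ i ∈ S, f i = false}

lemma miss_prob {n : ℕ} (p : ℝ) (h0 : 0 ≤ p) (h1 : p ≤ 1) (S : Finset (Fin n)) :
    rowMeasure n p (missSet S) = ENNReal.ofReal ((1 - p) ^ S.card) := by
  have hset : missSet S = Set.univ.pi (fun i => if i ∈ S then {false} else Set.univ) := by
    ext f
    simp only [missSet, Set.mem_setOf_eq, Set.mem_pi, Set.mem_univ, true_imp_iff]
    constructor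
    · intro h i
      by_cases hi : i ∈ S
      · simp [hi, h i hi]
      · simp [hi]
    · intro h i hi
      have := h i
      simpa [hi] using this
  rw [hset, rowMeasure, Measure.pi_pi]
  have : ∀ i : Fin n, bernoulliMeasure p (if i ∈ S then {false} else Set.univ)
      = if i ∈ S then ENNReal.ofReal (1 - p) else 1 := by
    intro i
    by_cases hi : i ∈ S
    · simp [hi, bern_false]
    · rw [if_neg hi, if_neg hi, bern_univ p h0 h1]
  simp_rw [this]
  rw [Finset.prod_ite_mem, Finset.univ_inter, Finset.prod_const,
    ← ENNReal.ofReal_pow (by linarith)]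

lemma missSet_inter {n : ℕ} (L K : Finset (Fin n)) :
    missSet L ∩ missSet K = missSet (L ∪ K) := by
  ext f; simp only [missSet, Set.mem_inter_iff, Set.mem_setOf_eq, Finset.mem_union]
  constructor
  · rintro ⟨hL, hK⟩ i (hi | hi); exacts [hL i hi, hK i hi]
  · intro h; exact ⟨fun i hi => h i (Or.inl hi), fun i hi => h i (Or.inr hi)⟩

lemma row_iff_prob {n : ℕ} (p : ℝ) (h0 : 0 ≤ p) (h1 : p ≤ 1) (k : ℕ)
    (L K : Finset (Fin n)) (hL : L.card = k) (hK : K.card = k) :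
    rowMeasure n p {f | (∃ i ∈ L, f i = true) ↔ (∃ i ∈ K, f i = true)}
      = ENNReal.ofReal (1 - 2 * (1 - p) ^ k + 2 * (1 - p) ^ (L ∪ K).card) := by
  set q : ℝ := 1 - p with hq
  have hq0 : 0 ≤ q := by linarith
  have hq1 : q ≤ 1 := by linarith
  set u := (L ∪ K).card with hu
  have hku : k ≤ u := hK ▸ Finset.card_le_card Finset.subset_union_right
  have hpow : q ^ u ≤ q ^ k := pow_le_pow_of_le_one hq0 hq1 hku
  set R : Set (Fin n → Bool) := {f | (∃ i ∈ L, f i = true) ↔ (∃ i ∈ K, f i = true)} with hR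
  have hcompl : Rᶜ = (missSet K \ missSet L) ∪ (missSet L \ missSet K) := by
    ext f
    have hbool : ∀ S : Finset (Fin n), (¬ f ∈ missSet S) ↔ ∃ i ∈ S, f i = true := by
      intro S
      simp only [missSet, Set.mem_setOf_eq]
      push_neg
      simp only [Bool.not_eq_false]
    simp only [hR, Set.mem_compl_iff, Set.mem_setOf_eq, Set.mem_union, Set.mem_diff,
      ← hbool]
    tauto
  have hmLK : missSet L ∪ missSet K ⊆ missSet K ∪ missSet L := by rw [Set.union_comm]
  have hdiff : ∀ S T : Finset (Fin n), rowMeasure n p (missSet S \ missSet T)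
      = ENNReal.ofReal (q ^ S.card - q ^ (T ∪ S).card) := by
    intro S T
    have h1' : missSet S \ missSet T = missSet S \ missSet (T ∪ S) := by
      rw [← missSet_inter]; ext f; simp [Set.mem_diff]
    rw [h1', measure_diff (by rw [← missSet_inter]; exact Set.inter_subset_right)
      ((Set.toFinite _).measurableSet.nullMeasurableSet) (measure_ne_top _ _),
      miss_prob p h0 h1, miss_prob p h0 h1,
      ENNReal.ofReal_sub _ (by positivity)]
  have hdisj : Disjoint (missSet K \ missSet L) (missSet L \ missSet K) := by
    rw [Set.disjoint_left]
    rintro f ⟨h1, h2⟩ ⟨h3, h4⟩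
    exact h2 h3
  have hA : q ^ (L ∪ K).card ≤ q ^ K.card :=
    pow_le_pow_of_le_one hq0 hq1 (Finset.card_le_card Finset.subset_union_right)
  have hB : q ^ (K ∪ L).card ≤ q ^ L.card :=
    pow_le_pow_of_le_one hq0 hq1 (Finset.card_le_card Finset.subset_union_right)
  have hRc : rowMeasure n p Rᶜ = ENNReal.ofReal (2 * (q ^ k - q ^ u)) := by
    rw [hcompl, measure_union hdisj (Set.toFinite _).measurableSet, hdiff, hdiff,
      ← ENNReal.ofReal_add (by linarith) (by linarith)]
    rw [hL, hK, Finset.union_comm K L]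
    congr 1
    ring
  have huniv : rowMeasure n p Set.univ = 1 := by
    rw [rowMeasure, Measure.pi_univ,
      Finset.prod_congr rfl fun i _ => bern_univ p h0 h1]
    simp
  have hcm := measure_compl (μ := rowMeasure n p) (s := Rᶜ)
    (Set.toFinite _).measurableSet (measure_ne_top _ _)
  rw [compl_compl, huniv, hRc] at hcm
  rw [hcm, ← ENNReal.ofReal_one, ← ENNReal.ofReal_sub _ (by linarith)]
  congr 1
  ring

lemma count_le {n : ℕ} (k b : ℕ) (K : Finset (Fin n)) (hK : K.card = k)
    (s : Finset (Finset (Fin n))) (hs : ∀ L ∈ s, L.card = k ∧ (L ∩ K).card = b) :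
    s.card ≤ k.choose b * (n - k).choose (k - b) := by
  classical
  have hinj : ∀ L1 ∈ s, ∀ L2 ∈ s,
      (fun L => (L ∩ K, L \ K)) L1 = (fun L => (L ∩ K, L \ K)) L2 → L1 = L2 := by
    intro L1 _ L2 _ heq
    simp only [Prod.mk.injEq] at heq
    have e1 : L1 ∩ K ∪ L1 \ K = L1 := by ext x; simp; tauto
    have e2 : L2 ∩ K ∪ L2 \ K = L2 := by ext x; simp; tauto
    rw [← e1, ← e2, heq.1, heq.2]
  have hmaps : ∀ L ∈ s, (fun L => (L ∩ K, L \ K)) L ∈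
      (K.powersetCard b) ×ˢ (Kᶜ.powersetCard (k - b)) := by
    intro L hL
    obtain ⟨hLk, hb⟩ := hs L hL
    have hcards : (L ∩ K).card + (L \ K).card = L.card := Finset.card_inter_add_card_sdiff L K
    simp only [Finset.mem_product, Finset.mem_powersetCard]
    refine ⟨⟨Finset.inter_subset_right, hb⟩, fun x hx => ?_, by omega⟩
    simp only [Finset.mem_compl]
    exact (Finset.mem_sdiff.mp hx).2
  have := Finset.card_le_card_of_injOn _ hmaps hinj
  simpa [Finset.card_powersetCard, hK, Finset.card_compl, Fintype.card_fin] using this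

lemma matrix_event_prob (m n : ℕ) (p : ℝ) (h0 : 0 ≤ p) (h1 : p ≤ 1) (k : ℕ)
    (L K : Finset (Fin n)) (hL : L.card = k) (hK : K.card = k) :
    matrixMeasure m n p {A | unionSupp A L = unionSupp A K}
      = ENNReal.ofReal ((1 - 2 * (1 - p) ^ k + 2 * (1 - p) ^ (L ∪ K).card) ^ m) := by
  set q : ℝ := 1 - p with hq
  have hq0 : 0 ≤ q := by linarith
  have hq1 : q ≤ 1 := by linarith
  have hu2k : (L ∪ K).card ≤ 2 * k := by
    have := Finset.card_union_le L K; omega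
  have hx0 : 0 ≤ 1 - 2 * q ^ k + 2 * q ^ (L ∪ K).card := by
    have h2k : q ^ (2 * k) ≤ q ^ (L ∪ K).card := pow_le_pow_of_le_one hq0 hq1 hu2k
    have hexp : q ^ (2 * k) = q ^ k * q ^ k := by rw [two_mul, pow_add]
    nlinarith [sq_nonneg (1 - q ^ k)]
  have hset : {A : Fin m → Fin n → Bool | unionSupp A L = unionSupp A K}
      = Set.univ.pi (fun _ : Fin m =>
          {f : Fin n → Bool | (∃ i ∈ L, f i = true) ↔ (∃ i ∈ K, f i = true)}) := by
    ext A
    simp only [Set.mem_setOf_eq, Set.mem_pi, Set.mem_univ, true_imp_iff]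
    rw [Finset.ext_iff]
    apply forall_congr'
    intro j
    simp [unionSupp, colSupp]
  rw [hset, matrixMeasure, Measure.pi_pi]
  have : ∀ j : Fin m, (Measure.pi fun _ : Fin n => bernoulliMeasure p)
      {f : Fin n → Bool | (∃ i ∈ L, f i = true) ↔ (∃ i ∈ K, f i = true)}
      = ENNReal.ofReal (1 - 2 * q ^ k + 2 * q ^ (L ∪ K).card) := by
    intro j
    exact row_iff_prob p h0 h1 k L K hL hK
  rw [Finset.prod_congr rfl fun j _ => this j, Finset.prod_const, Finset.card_univ,
    Fintype.card_fin, ← ENNReal.ofReal_pow hx0]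


/-- Union bound on the overlap probability: for a fixed set `K` of `k ≤ n/2` columns of a
random Bernoulli(`p`) matrix, with `q = 1 - p`, the probability that some other `k`-set `L`
satisfies `S(L) = S(K)` is at most
`Σ_{b=0}^{k-1} C(k,b)·C(n−k,k−b)·(1 − 2q^k + 2q^{2k−b})^m`. -/
theorem overlap_union_bound (m n k : ℕ) (p : ℝ) (hp0 : 0 < p) (hp1 : p < 1)
    (hkn : 2 * k ≤ n) (K : Finset (Fin n)) (hK : K.card = k) :
    matrixMeasure m n p
        {A | ∃ L : Finset (Fin n), L.card = k ∧ L ≠ K ∧ unionSupp A L = unionSupp A K}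
      ≤ ENNReal.ofReal (∑ b ∈ Finset.range k,
          (k.choose b : ℝ) * ((n - k).choose (k - b)) *
            (1 - 2 * (1 - p) ^ k + 2 * (1 - p) ^ (2 * k - b)) ^ m) := by
  classical
  have h0 : (0:ℝ) ≤ p := hp0.le
  have h1 : p ≤ 1 := hp1.le
  set q : ℝ := 1 - p with hq
  have hq0 : 0 ≤ q := by linarith
  have hq1 : q ≤ 1 := by linarith
  have hx0 : ∀ b : ℕ, 0 ≤ 1 - 2 * q ^ k + 2 * q ^ (2 * k - b) := by
    intro b
    have hle : q ^ (2 * k) ≤ q ^ (2 * k - b) :=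
      pow_le_pow_of_le_one hq0 hq1 (Nat.sub_le _ _)
    have hexp : q ^ (2 * k) = q ^ k * q ^ k := by rw [two_mul, pow_add]
    nlinarith [sq_nonneg (1 - q ^ k)]
  set F : ℕ → ENNReal := fun b => ENNReal.ofReal ((1 - 2 * q ^ k + 2 * q ^ (2 * k - b)) ^ m)
    with hF
  set 𝓛 : Finset (Finset (Fin n)) :=
    Finset.univ.filter (fun L => L.card = k ∧ L ≠ K) with h𝓛
  have hE : {A : Fin m → Fin n → Bool |
      ∃ L : Finset (Fin n), L.card = k ∧ L ≠ K ∧ unionSupp A L = unionSupp A K}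
      = ⋃ L ∈ 𝓛, {A | unionSupp A L = unionSupp A K} := by
    ext A
    simp only [Set.mem_setOf_eq, Set.mem_iUnion, h𝓛, Finset.mem_filter, Finset.mem_univ,
      true_and]
    constructor
    · rintro ⟨L, h1', h2', h3'⟩; exact ⟨L, ⟨h1', h2'⟩, h3'⟩
    · rintro ⟨L, ⟨h1', h2'⟩, h3'⟩; exact ⟨L, h1', h2', h3'⟩
  rw [hE]
  refine le_trans (measure_biUnion_finset_le _ _) ?_
  have hb_lt : ∀ L ∈ 𝓛, (L ∩ K).card < k := by
    intro L hL'
    simp only [h𝓛, Finset.mem_filter, Finset.mem_univ, true_and] at hL'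
    obtain ⟨hLk, hLne⟩ := hL'
    have hle : (L ∩ K).card ≤ k := hK ▸ Finset.card_le_card Finset.inter_subset_right
    rcases lt_or_eq_of_le hle with h | h
    · exact h
    · exfalso
      have hKsub : L ∩ K = K := Finset.eq_of_subset_of_card_le
        Finset.inter_subset_right (by rw [h, hK])
      have hKL : K ⊆ L := hKsub ▸ Finset.inter_subset_left
      exact hLne (Finset.eq_of_subset_of_card_le hKL (by rw [hLk, hK])).symm
  have hterm : ∀ L ∈ 𝓛, matrixMeasure m n p {A | unionSupp A L = unionSupp A K}
      = F ((L ∩ K).card) := by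
    intro L hL'
    simp only [h𝓛, Finset.mem_filter, Finset.mem_univ, true_and] at hL'
    obtain ⟨hLk, -⟩ := hL'
    have hcard : (L ∪ K).card = 2 * k - (L ∩ K).card := by
      have h2 := Finset.card_union_add_card_inter L K
      have h3 : (L ∩ K).card ≤ k := hK ▸ Finset.card_le_card Finset.inter_subset_right
      omega
    rw [matrix_event_prob m n p h0 h1 k L K hLk hK, hcard]
  rw [Finset.sum_congr rfl hterm,
    ← Finset.sum_fiberwise_of_maps_to (g := fun L => (L ∩ K).card) (t := Finset.range k)
      (fun L hL' => Finset.mem_range.mpr (hb_lt L hL')) (fun L => F ((L ∩ K).card))]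
  have hstep : ∀ b ∈ Finset.range k,
      ∑ L ∈ 𝓛.filter (fun L => (L ∩ K).card = b), F ((L ∩ K).card)
        ≤ ENNReal.ofReal ((k.choose b : ℝ) * ((n - k).choose (k - b)) *
            (1 - 2 * q ^ k + 2 * q ^ (2 * k - b)) ^ m) := by
    intro b _
    rw [Finset.sum_congr rfl (fun L hL' => by
      rw [(Finset.mem_filter.mp hL').2]), Finset.sum_const, nsmul_eq_mul]
    have hcount : (𝓛.filter (fun L => (L ∩ K).card = b)).card
        ≤ k.choose b * (n - k).choose (k - b) := by
      apply count_le k b K hK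
      intro L hL'
      simp only [h𝓛, Finset.mem_filter, Finset.mem_univ, true_and] at hL'
      exact ⟨hL'.1.1, hL'.2⟩
    calc ((𝓛.filter (fun L => (L ∩ K).card = b)).card : ENNReal) * F b
        ≤ ((k.choose b * (n - k).choose (k - b) : ℕ) : ENNReal) * F b := by
          exact mul_le_mul_left (by exact_mod_cast Nat.cast_le.mpr hcount) _
      _ = ENNReal.ofReal ((k.choose b : ℝ) * ((n - k).choose (k - b)) *
            (1 - 2 * q ^ k + 2 * q ^ (2 * k - b)) ^ m) := by
          rw [hF, ← ENNReal.ofReal_natCast, ← ENNReal.ofReal_mul (by positivity)]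
          congr 1
          push_cast
          ring
  refine le_trans (Finset.sum_le_sum hstep) ?_
  rw [ENNReal.ofReal_sum_of_nonneg]
  intro b _
  have := hx0 b
  positivity
end

section
/- Let n, k be integers with k ≥ 2 and n > 2k, let δ > 0, and let m be a real number with m ≥ (1+δ)·k·log₂(nk). Then Σ_{c=1}^{k} C(k,c)·C(n−k,c)·2^{−cm/k} ≤ 2·(nk)^{−δ}, where C(·,·) denotes the binomial coefficient. -/
lemma two_pow_pred_le_factorial : ∀ c : ℕ, 1 ≤ c → 2 ^ (c - 1) ≤ c.factorial
  | 1, _ => le_refl _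
  | (c+2), _ => by
    have ih := two_pow_pred_le_factorial (c+1) (by omega)
    calc 2 ^ (c + 2 - 1) = 2 * 2 ^ (c + 1 - 1) := by simp [pow_succ]; ring
      _ ≤ (c + 2) * (c+1).factorial := Nat.mul_le_mul (by omega) ih
      _ = (c+2).factorial := rfl

/-- Key quantitative bound: for `k ≥ 2`, `n > 2k` and
`m ≥ (1+δ)·k·log₂(nk)`, the sum `Σ_{c=1}^{k} C(k,c)·C(n−k,c)·2^{−cm/k}`
is at most `2·(nk)^{−δ}`. -/
theorem overlap_sum_bound (n k : ℕ) (hk : 2 ≤ k) (hn : 2 * k < n)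
    (δ m : ℝ) (hδ : 0 < δ) (hm : m ≥ (1 + δ) * k * Real.logb 2 ((n : ℝ) * k)) :
    ∑ c ∈ Finset.Icc 1 k,
        (k.choose c : ℝ) * ((n - k).choose c : ℝ) * (2 : ℝ) ^ (-(c : ℝ) * m / k)
      ≤ 2 * ((n : ℝ) * k) ^ (-δ) := by
  set N : ℝ := (n : ℝ) * k with hNdef
  have hk0 : (0:ℝ) < k := by positivity
  have hN1 : (1:ℝ) < N := by
    have h1 : (2:ℝ) ≤ (k:ℝ) := by exact_mod_cast hk
    have h2 : (2:ℝ) ≤ (n:ℝ) := by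
      have : 2 ≤ n := by omega
      exact_mod_cast this
    nlinarith
  have hN0 : (0:ℝ) < N := by linarith
  have hlogN : 0 ≤ Real.logb 2 N := Real.logb_nonneg (by norm_num) (le_of_lt hN1)
  -- per-term bound
  have hterm : ∀ c ∈ Finset.Icc 1 k,
      (k.choose c : ℝ) * ((n - k).choose c : ℝ) * (2 : ℝ) ^ (-(c : ℝ) * m / k)
        ≤ N ^ (-δ) * (1/2 : ℝ) ^ (c - 1) := by
    intro c hc
    simp only [Finset.mem_Icc] at hc
    obtain ⟨hc1, hck⟩ := hc
    have hc1R : (1:ℝ) ≤ (c:ℝ) := by exact_mod_cast hc1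
    have hfac1 : (1:ℝ) ≤ (c.factorial : ℝ) := by exact_mod_cast c.factorial_pos
    have hfac0 : (0:ℝ) < (c.factorial : ℝ) := by linarith
    have hE : (2 : ℝ) ^ (-(c : ℝ) * m / k) ≤ N ^ (-(1+δ) * c) := by
      have hexp : -(c : ℝ) * m / k ≤ (-(1+δ) * c) * Real.logb 2 N := by
        rw [div_le_iff₀ hk0]
        have hcm : (c:ℝ) * ((1 + δ) * k * Real.logb 2 N) ≤ (c:ℝ) * m :=
          mul_le_mul_of_nonneg_left hm (by positivity)
        nlinarith
      calc (2 : ℝ) ^ (-(c : ℝ) * m / k) ≤ (2:ℝ) ^ ((-(1+δ) * c) * Real.logb 2 N) :=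
            Real.rpow_le_rpow_of_exponent_le (by norm_num) hexp
        _ = N ^ (-(1+δ) * c) := by
            rw [mul_comm (-(1+δ) * (c:ℝ)), Real.rpow_mul (by norm_num : (0:ℝ) ≤ 2),
              Real.rpow_logb (by norm_num) (by norm_num) hN0]
    have hA : (k.choose c : ℝ) ≤ (k:ℝ) ^ c / c.factorial := Nat.choose_le_pow_div c k
    have hB : ((n-k).choose c : ℝ) ≤ (n:ℝ) ^ c / c.factorial := by
      have h1 : ((n-k).choose c : ℝ) ≤ ((n-k : ℕ):ℝ) ^ c / c.factorial :=
        Nat.choose_le_pow_div c (n-k)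
      have h2 : ((n-k:ℕ):ℝ) ^ c ≤ (n:ℝ)^c := by
        apply pow_le_pow_left₀ (by positivity)
        exact_mod_cast Nat.sub_le n k
      calc ((n-k).choose c : ℝ) ≤ ((n-k : ℕ):ℝ) ^ c / c.factorial := h1
        _ ≤ (n:ℝ) ^ c / c.factorial := by gcongr
    have hstep : (k.choose c : ℝ) * ((n - k).choose c : ℝ) * (2 : ℝ) ^ (-(c : ℝ) * m / k)
        ≤ (k:ℝ) ^ c / c.factorial * ((n:ℝ) ^ c / c.factorial) * N ^ (-(1+δ) * c) := by
      have hE0 : (0:ℝ) ≤ (2 : ℝ) ^ (-(c : ℝ) * m / k) := by positivity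
      apply mul_le_mul (mul_le_mul hA hB (by positivity) (by positivity)) hE hE0
      positivity
    have heq : (k:ℝ) ^ c / c.factorial * ((n:ℝ) ^ c / c.factorial) * N ^ (-(1+δ) * c)
        = N ^ (-δ * (c:ℝ)) * (1 / ((c.factorial:ℝ) * c.factorial)) := by
      have h1 : (k:ℝ)^c * (n:ℝ)^c = N ^ ((c:ℝ)) := by
        rw [← mul_pow, mul_comm ((k:ℝ)), ← hNdef, ← Real.rpow_natCast]
      have h2 : N^((c:ℝ)) * N^(-(1+δ)*c) = N^(-δ*(c:ℝ)) := by
        rw [← Real.rpow_add hN0]; ring_nf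
      calc (k:ℝ) ^ c / c.factorial * ((n:ℝ) ^ c / c.factorial) * N ^ (-(1+δ) * c)
          = (N^((c:ℝ)) * N^(-(1+δ)*c)) * (1 / ((c.factorial:ℝ) * c.factorial)) := by
            rw [div_mul_div_comm, h1]; ring
        _ = N ^ (-δ * (c:ℝ)) * (1 / ((c.factorial:ℝ) * c.factorial)) := by rw [h2]
    have hfin : N ^ (-δ * (c:ℝ)) * (1 / ((c.factorial:ℝ) * c.factorial))
        ≤ N ^ (-δ) * (1/2 : ℝ) ^ (c - 1) := by
      have hNc : N ^ (-δ * (c:ℝ)) ≤ N ^ (-δ) := by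
        apply Real.rpow_le_rpow_of_exponent_le (le_of_lt hN1)
        nlinarith
      have hff : (1 : ℝ) / ((c.factorial:ℝ) * c.factorial) ≤ (1/2 : ℝ) ^ (c - 1) := by
        have h2c : (2:ℝ) ^ (c-1) ≤ (c.factorial:ℝ) := by
          exact_mod_cast two_pow_pred_le_factorial c hc1
        have h2c' : (2:ℝ) ^ (c-1) ≤ (c.factorial:ℝ) * c.factorial := by nlinarith
        have := one_div_le_one_div_of_le (by positivity : (0:ℝ) < (2:ℝ)^(c-1)) h2c'
        calc (1:ℝ) / ((c.factorial:ℝ) * c.factorial) ≤ 1 / (2:ℝ)^(c-1) := this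
          _ = (1/2:ℝ)^(c-1) := by rw [div_pow, one_pow]
      have := mul_le_mul hNc hff (by positivity) (by positivity)
      linarith
    linarith [heq ▸ hstep]
  calc ∑ c ∈ Finset.Icc 1 k,
        (k.choose c : ℝ) * ((n - k).choose c : ℝ) * (2 : ℝ) ^ (-(c : ℝ) * m / k)
      ≤ ∑ c ∈ Finset.Icc 1 k, N ^ (-δ) * (1/2 : ℝ) ^ (c - 1) := Finset.sum_le_sum hterm
    _ = N ^ (-δ) * ∑ c ∈ Finset.Icc 1 k, (1/2 : ℝ) ^ (c - 1) := by
        rw [Finset.mul_sum]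
    _ ≤ N ^ (-δ) * 2 := by
        apply mul_le_mul_of_nonneg_left ?_ (by positivity)
        have : ∑ c ∈ Finset.Icc 1 k, (1/2 : ℝ) ^ (c - 1)
            = ∑ i ∈ Finset.range k, (1/2 : ℝ) ^ i := by
          rw [← Finset.Ico_add_one_right_eq_Icc, Finset.sum_Ico_eq_sum_range]
          simp
        rw [this, geom_sum_eq (by norm_num)]
        have hp : (0:ℝ) < (1/2:ℝ)^k := by positivity
        rw [div_le_iff_of_neg (by norm_num)]
        linarith
    _ = 2 * N ^ (-δ) := by ring
end

section
/- For all real y with 0 ≤ y < 1, the inequality y + (1−y)·ln(1−y) ≤ (1 + y·(1−ln 2)/ln 2)·ln(1 + y²) holds. -/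
/-!
The first term of the series `log (1 + a) = 2 ∑ (a / (a + 2)) ^ (2k+1) / (2k+1)` gives
`-log (1 - y) ≥ 2y / (2 - y)`, so the left side is at most `y² / (2 - y)`. Since `log 2 ≥ 1/2`,
this is at most `y² (log 2 + (1 - log 2) y)`, and concavity of `log` on `[1, 2]` gives
`log (1 + t) ≥ t log 2` for `t ∈ [0, 1]`; with `t = y²` the right side is bounded below by exactly
that quantity.
-/

open Real

theorem two_mul_div_add_two_le_log_one_add {a : ℝ} (ha : 0 ≤ a) :
    2 * a / (a + 2) ≤ log (1 + a) := by
  have h := le_hasSum (hasSum_log_one_add ha) 0 fun _ _ ↦ by positivity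
  simpa [mul_div_assoc] using h

theorem add_one_sub_mul_log_one_sub_le_sq_div {y : ℝ} (hy0 : 0 ≤ y) (hy1 : y < 1) :
    y + (1 - y) * log (1 - y) ≤ y ^ 2 / (2 - y) := by
  have hu : 0 < 1 - y := by linarith
  have hlog : 2 * y / (2 - y) ≤ -log (1 - y) := by
    have h := two_mul_div_add_two_le_log_one_add (div_nonneg hy0 hu.le)
    have h2y : 2 - y ≠ 0 := by linarith
    rwa [show 1 + y / (1 - y) = (1 - y)⁻¹ by field_simp; ring, log_inv,
      show 2 * (y / (1 - y)) / (y / (1 - y) + 2) = 2 * y / (2 - y) by field_simp; ring] at h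
  calc y + (1 - y) * log (1 - y) ≤ y + (1 - y) * -(2 * y / (2 - y)) := by
        gcongr; linarith
    _ = y ^ 2 / (2 - y) := by field_simp [show 2 - y ≠ 0 by linarith]; ring

theorem mul_log_two_le_log_one_add {t : ℝ} (ht0 : 0 ≤ t) (ht1 : t ≤ 1) :
    t * log 2 ≤ log (1 + t) := by
  have h := strictConcaveOn_log_Ioi.concaveOn.2 (x := 1) (y := 2) (by norm_num) (by norm_num)
    (sub_nonneg.2 ht1) ht0 (by ring)
  simp only [smul_eq_mul, log_one, mul_zero, zero_add] at h
  rwa [show (1 - t) * 1 + t * 2 = 1 + t by ring] at h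

theorem sq_div_two_sub_le_sq_mul {c y : ℝ} (hc : 1 / 2 ≤ c) (hy0 : 0 ≤ y) (hy1 : y ≤ 1) :
    y ^ 2 / (2 - y) ≤ y ^ 2 * (c + (1 - c) * y) := by
  have hfactor : 0 ≤ (1 - y) * ((1 - c) * y + 2 * c - 1) := by
    apply mul_nonneg (by linarith)
    nlinarith
  rw [div_le_iff₀ (by linarith)]
  nlinarith [mul_nonneg (sq_nonneg y) hfactor]

/-- For `y ∈ [0,1)`,
`y + (1−y)·ln(1−y) ≤ (1 + y(1−ln 2)/ln 2)·ln(1 + y²)`. -/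
theorem key_rate_inequality (y : ℝ) (hy0 : 0 ≤ y) (hy1 : y < 1) :
    y + (1 - y) * Real.log (1 - y)
      ≤ (1 + y * (1 - Real.log 2) / Real.log 2) * Real.log (1 + y ^ 2) := by
  have hL : 1 / 2 ≤ log 2 := by linarith [log_two_gt_d9]
  have hcoef : 0 ≤ 1 + y * (1 - log 2) / log 2 := by
    have : 0 ≤ y * (1 - log 2) / log 2 :=
      div_nonneg (mul_nonneg hy0 (by linarith [log_two_lt_d9])) (by linarith)
    linarith
  calc y + (1 - y) * log (1 - y) ≤ y ^ 2 / (2 - y) :=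
        add_one_sub_mul_log_one_sub_le_sq_div hy0 hy1
    _ ≤ y ^ 2 * (log 2 + (1 - log 2) * y) := sq_div_two_sub_le_sq_mul hL hy0 hy1.le
    _ = (1 + y * (1 - log 2) / log 2) * (y ^ 2 * log 2) := by field_simp
    _ ≤ (1 + y * (1 - log 2) / log 2) * log (1 + y ^ 2) := by
        gcongr
        exact mul_log_two_le_log_one_add (sq_nonneg y) (pow_le_one₀ hy0 hy1.le)
end

section
/- For all real y with 1/2 ≤ y < 1, the inequality y + (1−y)·ln(1−y) ≤ (1 + y·(1−ln 2)/ln 2)·(ln 2 − (1 − y)) holds. -/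
/-- For `y ∈ [1/2, 1)`,
`y + (1−y)·ln(1−y) ≤ (1 + y(1−ln 2)/ln 2)·(ln 2 − (1 − y))`. -/
theorem key_rate_inequality_large_y (y : ℝ) (hy0 : 1 / 2 ≤ y) (hy1 : y < 1) :
    y + (1 - y) * Real.log (1 - y)
      ≤ (1 + y * (1 - Real.log 2) / Real.log 2) * (Real.log 2 - (1 - y)) := by
  set L := Real.log 2 with hLdef
  have hL1 : 0.6931471803 < L := Real.log_two_gt_d9
  have hL2 : L < 0.6931471808 := Real.log_two_lt_d9
  have hLpos : (0:ℝ) < L := by linarith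
  have ht : (0:ℝ) < 1 - y := by linarith
  have hlog : Real.log (1 - y) ≤ 2 * (1 - y) - 1 - L := by
    have h1 : Real.log (2 * (1 - y)) ≤ 2 * (1 - y) - 1 :=
      Real.log_le_sub_one_of_pos (by linarith)
    have h2 : Real.log (2 * (1 - y)) = L + Real.log (1 - y) := by
      rw [Real.log_mul (by norm_num) (ne_of_gt ht), hLdef]
    linarith
  have hmul : (1 - y) * Real.log (1 - y) ≤ (1 - y) * (2 * (1 - y) - 1 - L) :=
    mul_le_mul_of_nonneg_left hlog (le_of_lt ht)
  have key : y + (1 - y) * (2 * (1 - y) - 1 - L)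
      ≤ (1 + y * (1 - L) / L) * (L - (1 - y)) := by
    have expand : (1 + y * (1 - L) / L) = (L + y * (1 - L)) / L := by
      field_simp
    rw [expand, div_mul_eq_mul_div, le_div_iff₀ hLpos]
    nlinarith [sq_nonneg (1 - y), sq_nonneg L, sq_nonneg (y - 1/2), mul_pos hLpos hLpos,
      mul_nonneg (sub_nonneg.2 hy0) (le_of_lt hLpos), sq_nonneg (L - 0.6931471803)]
  linarith
end

section
/- For every real t with 0 ≤ t ≤ 1 and every positive integer k, the inequality Σ_{c=1}^{k} (e²·t/c²)^c ≤ 5·e²·t holds, where e is the base of the natural logarithm. -/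
set_option maxHeartbeats 800000 in
/-- For `0 ≤ t ≤ 1` and a positive integer `k`,
`Σ_{c=1}^{k} (e²·t/c²)^c ≤ 5·e²·t`. -/
theorem geometric_tail_sum_bound (t : ℝ) (ht0 : 0 ≤ t) (ht1 : t ≤ 1)
    (k : ℕ) (hk : 1 ≤ k) :
    ∑ c ∈ Finset.Icc 1 k, (Real.exp 1 ^ 2 * t / (c : ℝ) ^ 2) ^ c
      ≤ 5 * Real.exp 1 ^ 2 * t := by
  set E := Real.exp 1 with hE
  have hEpos : (0:ℝ) < E := Real.exp_pos 1
  have hEub : E ≤ 2.7182818286 := le_of_lt Real.exp_one_lt_d9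
  have hElb : (2.7182818283:ℝ) ≤ E := le_of_lt Real.exp_one_gt_d9
  set r : ℝ := 822/1000 with hr
  have hr0 : (0:ℝ) ≤ r := by norm_num
  have hr1 : r < 1 := by norm_num
  -- termwise bound
  have key : ∀ c ∈ Finset.Icc 1 k,
      (E ^ 2 * t / (c : ℝ) ^ 2) ^ c
        ≤ t * ((if c ≤ 2 then E ^ 2 else 0) + r ^ c) := by
    intro c hc
    have hc1 : 1 ≤ c := (Finset.mem_Icc.mp hc).1
    have hrc : (0:ℝ) ≤ r ^ c := pow_nonneg hr0 c
    by_cases h2 : c ≤ 2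
    · simp only [h2, if_pos]
      have hE2l : (7:ℝ) ≤ E ^ 2 := by nlinarith
      have hE2u : E ^ 2 ≤ 739/100 := by nlinarith
      interval_cases c
      · push_cast
        norm_num
        nlinarith
      · push_cast
        have heq : (E ^ 2 * t / (2:ℝ) ^ 2) ^ 2 = E ^ 4 * t ^ 2 / 16 := by ring
        rw [heq]
        have h4 : E ^ 4 ≤ 55 := by nlinarith
        have h5 : t ^ 2 ≤ t := by nlinarith
        have h6 : E ^ 4 * t ^ 2 ≤ 55 * t := by nlinarith [sq_nonneg t, sq_nonneg E]
        nlinarith [mul_nonneg ht0 (sub_nonneg.mpr hE2l)]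
    · simp only [h2, if_neg, not_false_iff, zero_add]
      push_neg at h2
      have hc3 : 3 ≤ c := h2
      have hcR : (9:ℝ) ≤ (c:ℝ) ^ 2 := by
        have : (3:ℝ) ≤ (c:ℝ) := by exact_mod_cast hc3
        nlinarith
      have hbase0 : 0 ≤ E ^ 2 * t / (c : ℝ) ^ 2 :=
        div_nonneg (mul_nonneg (sq_nonneg E) ht0) (sq_nonneg _)
      have hE2u : E ^ 2 ≤ 739/100 := by nlinarith
      have hbase : E ^ 2 * t / (c : ℝ) ^ 2 ≤ r * t := by
        rw [div_le_iff₀ (by nlinarith)]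
        have h1 : E ^ 2 * t ≤ 739/100 * t := by nlinarith
        have h2 : 739/100 * t ≤ r * t * (c:ℝ) ^ 2 := by
          nlinarith [mul_nonneg (mul_nonneg hr0 ht0) (sub_nonneg.mpr hcR)]
        exact h1.trans h2
      calc (E ^ 2 * t / (c : ℝ) ^ 2) ^ c ≤ (r * t) ^ c :=
            pow_le_pow_left₀ hbase0 hbase c
        _ = r ^ c * t ^ c := mul_pow r t c
        _ ≤ r ^ c * t := by
            have : t ^ c ≤ t := pow_le_of_le_one ht0 ht1 (by omega)
            nlinarith
        _ = t * r ^ c := mul_comm _ _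
  have step1 : ∑ c ∈ Finset.Icc 1 k, (E ^ 2 * t / (c : ℝ) ^ 2) ^ c
      ≤ t * ∑ c ∈ Finset.Icc 1 k, ((if c ≤ 2 then E ^ 2 else 0) + r ^ c) := by
    rw [Finset.mul_sum]
    exact Finset.sum_le_sum key
  have hsum_split : ∑ c ∈ Finset.Icc 1 k, ((if c ≤ 2 then E ^ 2 else 0) + r ^ c)
      = (∑ c ∈ Finset.Icc 1 k, (if c ≤ 2 then E ^ 2 else 0))
        + ∑ c ∈ Finset.Icc 1 k, r ^ c := Finset.sum_add_distrib
  have hif : (∑ c ∈ Finset.Icc 1 k, (if c ≤ 2 then E ^ 2 else (0:ℝ))) ≤ 2 * E ^ 2 := by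
    rw [← Finset.sum_filter]
    have hsub : (Finset.Icc 1 k).filter (fun c => c ≤ 2) ⊆ Finset.Icc 1 2 := by
      intro c hcm
      simp only [Finset.mem_filter, Finset.mem_Icc] at hcm ⊢
      exact ⟨hcm.1.1, hcm.2⟩
    calc (∑ c ∈ (Finset.Icc 1 k).filter (fun c => c ≤ 2), E ^ 2)
        ≤ ∑ c ∈ Finset.Icc 1 2, E ^ 2 :=
          Finset.sum_le_sum_of_subset_of_nonneg hsub (fun _ _ _ => sq_nonneg E)
      _ = 2 * E ^ 2 := by rw [Finset.sum_const, Nat.card_Icc]; norm_num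
  have hgeom : (∑ c ∈ Finset.Icc 1 k, r ^ c) ≤ 1000/178 := by
    have hsummable : Summable (fun c : ℕ => r ^ c) := summable_geometric_of_lt_one hr0 hr1
    have h1 : (∑ c ∈ Finset.Icc 1 k, r ^ c) ≤ ∑' c : ℕ, r ^ c :=
      Summable.sum_le_tsum _ (fun c _ => pow_nonneg hr0 c) hsummable
    rw [tsum_geometric_of_lt_one hr0 hr1] at h1
    calc (∑ c ∈ Finset.Icc 1 k, r ^ c) ≤ (1 - r)⁻¹ := h1
      _ = 1000/178 := by norm_num [hr]
  have step2 : ∑ c ∈ Finset.Icc 1 k, ((if c ≤ 2 then E ^ 2 else 0) + r ^ c)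
      ≤ 2 * E ^ 2 + 1000/178 := by
    rw [hsum_split]; exact add_le_add hif hgeom
  calc ∑ c ∈ Finset.Icc 1 k, (E ^ 2 * t / (c : ℝ) ^ 2) ^ c
      ≤ t * ∑ c ∈ Finset.Icc 1 k, ((if c ≤ 2 then E ^ 2 else 0) + r ^ c) := step1
    _ ≤ t * (2 * E ^ 2 + 1000/178) := by
        apply mul_le_mul_of_nonneg_left step2 ht0
    _ ≤ 5 * E ^ 2 * t := by
        have hE2l : (7:ℝ) ≤ E ^ 2 := by nlinarith
        nlinarith [mul_nonneg ht0 (sub_nonneg.mpr hE2l)]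
end
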